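/- arXiv:2208.06026 — 2 statements merged into one kernel-verified Lean document; each statement's English description precedes it below -/
import Mathlib

section
/- Let H be a real Hilbert space, φ : H → ℝ a convex lower semicontinuous function with φ(y) ≥ φ(0) = 0 for all y ∈ H, and let ε > 0. Then for every u ∈ H the function v ↦ (1/2)‖u − v‖² + ε·φ(v) attains its infimum over H at a unique point J_ε(u); moreover (1/ε)·(u − J_ε(u)) is a subgradient of φ at J_ε(u), i.e. ⟨(1/ε)(u − J_ε(u)), v − J_ε(u)⟩ + φ(J_ε(u)) ≤ φ(v) for all v ∈ H. -/
open RealInnerProductSpace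

/-!
By the parallelogram law, `F v = ½‖u - v‖² + εφ(v)` satisfies
`F((v + w)/2) + ⅛‖v - w‖² ≤ (F v + F w)/2`. Hence any two points whose values are within `a`
and `b` of `inf F` are at distance at most `√(4(a + b))`: a minimizing sequence is Cauchy, its
limit is a minimizer by lower semicontinuity, and the minimizer is unique. Comparing `F` at the
minimizer `j` with `F` at `j + t(v - j)` and letting `t → 0⁺` gives the subgradient inequality.
-/

open Set Filter Topology

section MidpointStronglyConvex

variable {E : Type*} [NormedAddCommGroup E] [NormedSpace ℝ E] {F : E → ℝ} {c m : ℝ}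

theorem sq_dist_le_of_le_add_of_midpoint_le
    (hmid : ∀ v w, F (midpoint ℝ v w) + c * dist v w ^ 2 ≤ (F v + F w) / 2)
    (hm : ∀ v, m ≤ F v) {v w : E} {a b : ℝ} (hv : F v ≤ m + a) (hw : F w ≤ m + b) :
    c * dist v w ^ 2 ≤ (a + b) / 2 := by
  linarith [hmid v w, hm (midpoint ℝ v w)]

theorem exists_forall_le_of_midpoint_le [CompleteSpace E] (hF : LowerSemicontinuous F)
    (hbdd : BddBelow (range F)) (hc : 0 < c)
    (hmid : ∀ v w, F (midpoint ℝ v w) + c * dist v w ^ 2 ≤ (F v + F w) / 2) :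
    ∃ j, ∀ v, F j ≤ F v := by
  set m := ⨅ v, F v
  have hm : ∀ v, m ≤ F v := ciInf_le hbdd
  have hinv : Tendsto (fun n : ℕ => 1 / ((n : ℝ) + 1)) atTop (𝓝 0) :=
    tendsto_one_div_add_atTop_nhds_zero_nat
  choose x hx using fun n : ℕ => exists_lt_of_ciInf_lt (lt_add_of_pos_right m
    (Nat.one_div_pos_of_nat : 0 < 1 / ((n : ℝ) + 1)))
  have hcauchy : CauchySeq x := by
    refine cauchySeq_of_le_tendsto_0 (fun N => √(1 / ((N : ℝ) + 1) / c)) (fun n k N hn hk => ?_)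
      (by simpa using (hinv.div_const c).sqrt)
    have hN : ∀ i, N ≤ i → 1 / ((i : ℝ) + 1) ≤ 1 / ((N : ℝ) + 1) := fun i hi =>
      Nat.one_div_le_one_div hi
    refine Real.le_sqrt_of_sq_le ((le_div_iff₀ hc).2 ?_)
    have := sq_dist_le_of_le_add_of_midpoint_le hmid hm (hx n).le (hx k).le
    linarith [hN n hn, hN k hk]
  obtain ⟨j, hj⟩ := cauchySeq_tendsto_of_complete hcauchy
  refine ⟨j, fun v => le_trans ?_ (hm v)⟩
  refine le_of_forall_pos_le_add fun δ hδpos => ?_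
  refine (hF.isClosed_preimage (m + δ)).mem_of_tendsto hj ?_
  filter_upwards [hinv.eventually (gt_mem_nhds hδpos)] with n hn
  exact (hx n).le.trans (by linarith)

end MidpointStronglyConvex

section Prox

variable {H : Type*} [NormedAddCommGroup H] [InnerProductSpace ℝ H] {g : H → ℝ} {u : H}

theorem ConvexOn.half_sq_norm_sub_add_midpoint_le (hg : ConvexOn ℝ univ g) (v w : H) :
    ((1/2) * ‖u - midpoint ℝ v w‖^2 + g (midpoint ℝ v w)) + 1/8 * dist v w ^ 2 ≤
      ((1/2) * ‖u - v‖^2 + g v + ((1/2) * ‖u - w‖^2 + g w)) / 2 := by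
  have hapollonius := EuclideanGeometry.dist_sq_add_dist_sq_eq_two_mul_dist_midpoint_sq_add_half_dist_sq
    u v w
  have hgmid : g (midpoint ℝ v w) ≤ (g v + g w) / 2 := by
    have := hg.2 (mem_univ v) (mem_univ w) (by norm_num : (0:ℝ) ≤ 1/2)
      (by norm_num : (0:ℝ) ≤ 1/2) (by norm_num)
    rw [midpoint_eq_smul_add, smul_add, invOf_eq_inv, ← one_div]
    simp only [smul_eq_mul] at this
    linarith
  simp only [dist_eq_norm] at hapollonius ⊢
  nlinarith

def IsProxPoint (g : H → ℝ) (u j : H) : Prop :=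
  ∀ v, (1/2) * ‖u - j‖^2 + g j ≤ (1/2) * ‖u - v‖^2 + g v

theorem ConvexOn.exists_isProxPoint [CompleteSpace H] (hg : ConvexOn ℝ univ g)
    (hlsc : LowerSemicontinuous g) (hbdd : BddBelow (range g)) (u : H) :
    ∃ j, IsProxPoint g u j := by
  obtain ⟨b, hb⟩ := hbdd
  refine exists_forall_le_of_midpoint_le (F := fun v => (1/2) * ‖u - v‖^2 + g v)
    ((by fun_prop : Continuous fun v : H => (1/2) * ‖u - v‖^2).lowerSemicontinuous.add hlsc)
    ⟨b, ?_⟩ (by norm_num : (0:ℝ) < 1/8) hg.half_sq_norm_sub_add_midpoint_le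
  rintro _ ⟨v, rfl⟩
  nlinarith [hb ⟨v, rfl⟩, sq_nonneg ‖u - v‖]

theorem ConvexOn.isProxPoint_unique (hg : ConvexOn ℝ univ g) {j j' : H}
    (hj : IsProxPoint g u j) (hj' : IsProxPoint g u j') : j' = j := by
  have := sq_dist_le_of_le_add_of_midpoint_le (F := fun v => (1/2) * ‖u - v‖^2 + g v)
    hg.half_sq_norm_sub_add_midpoint_le hj (v := j') (w := j) (a := 0) (b := 0)
    (by simpa using hj' j) (by simp)
  exact dist_le_zero.1 (by nlinarith [dist_nonneg (x := j') (y := j)])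

theorem IsProxPoint.inner_sub_le (hg : ConvexOn ℝ univ g) {j : H} (hj : IsProxPoint g u j)
    (v : H) : ⟪u - j, v - j⟫ ≤ g v - g j := by
  have key : ∀ t ∈ Ioo (0:ℝ) 1, ⟪u - j, v - j⟫ ≤ t / 2 * ‖v - j‖^2 + (g v - g j) := by
    rintro t ⟨ht0, ht1⟩
    have hgt : g (j + t • (v - j)) ≤ (1 - t) * g j + t * g v := by
      rw [show j + t • (v - j) = (1 - t) • j + t • v by module]
      exact hg.2 (mem_univ j) (mem_univ v) (by linarith) ht0.le (by ring)
    have hnorm : ‖u - (j + t • (v - j))‖^2 =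
        ‖u - j‖^2 - 2 * t * ⟪u - j, v - j⟫ + t^2 * ‖v - j‖^2 := by
      rw [show u - (j + t • (v - j)) = (u - j) - t • (v - j) by abel, norm_sub_sq_real,
        real_inner_smul_right, norm_smul, Real.norm_eq_abs, abs_of_pos ht0, mul_pow]
      ring
    have hjt := hj (j + t • (v - j))
    rw [hnorm] at hjt
    refine le_of_mul_le_mul_left ?_ ht0
    nlinarith
  have hlim : Tendsto (fun t : ℝ => t / 2 * ‖v - j‖^2 + (g v - g j)) (𝓝[>] 0)
      (𝓝 (g v - g j)) := by
    have hcont : Continuous fun t : ℝ => t / 2 * ‖v - j‖^2 + (g v - g j) := by fun_prop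
    exact (hcont.tendsto' 0 _ (by simp)).mono_left nhdsWithin_le_nhds
  exact ge_of_tendsto hlim (eventually_of_mem (Ioo_mem_nhdsGT one_pos) key)

end Prox

theorem stmt_0_general {H : Type*} [NormedAddCommGroup H] [InnerProductSpace ℝ H] [CompleteSpace H]
    (φ : H → ℝ) (hconv : ConvexOn ℝ Set.univ φ) (hlsc : LowerSemicontinuous φ)
    (hφnn : ∀ y : H, 0 ≤ φ y) (ε : ℝ) (hε : 0 < ε) (u : H) :
    ∃ j : H,
      (∀ v : H, (1/2) * ‖u - j‖^2 + ε * φ j ≤ (1/2) * ‖u - v‖^2 + ε * φ v) ∧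
      (∀ j' : H,
        (∀ v : H, (1/2) * ‖u - j'‖^2 + ε * φ j' ≤ (1/2) * ‖u - v‖^2 + ε * φ v) → j' = j) ∧
      (∀ v : H, ⟪(1/ε) • (u - j), v - j⟫ + φ j ≤ φ v) := by
  set g : H → ℝ := fun v => ε * φ v
  have hg : ConvexOn ℝ univ g := hconv.smul hε.le
  have hglsc : LowerSemicontinuous g :=
    (continuous_const_mul ε).comp_lowerSemicontinuous hlsc (monotone_mul_left_of_nonneg hε.le)
  have hgbdd : BddBelow (range g) := ⟨0, by rintro _ ⟨v, rfl⟩; exact mul_nonneg hε.le (hφnn v)⟩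
  obtain ⟨j, hj⟩ := hg.exists_isProxPoint hglsc hgbdd u
  refine ⟨j, hj, fun j' hj' => hg.isProxPoint_unique hj hj', fun v => ?_⟩
  have hsub : ⟪u - j, v - j⟫ / ε ≤ φ v - φ j := by
    rw [div_le_iff₀' hε, mul_sub]
    exact hj.inner_sub_le hg v
  rw [real_inner_smul_left, one_div_mul_eq_div]
  linarith

/-- existence and uniqueness of the minimizer `J_ε u` of
`v ↦ (1/2)‖u − v‖² + ε·φ(v)`, and `(1/ε)(u − J_ε u)` is a subgradient of `φ` at `J_ε u`. -/
theorem stmt_0 {H : Type*} [NormedAddCommGroup H] [InnerProductSpace ℝ H] [CompleteSpace H]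
    (φ : H → ℝ) (hconv : ConvexOn ℝ Set.univ φ) (hlsc : LowerSemicontinuous φ)
    (hφ0 : φ 0 = 0) (hφnn : ∀ y : H, 0 ≤ φ y) (ε : ℝ) (hε : 0 < ε) (u : H) :
    ∃ j : H,
      (∀ v : H, (1/2) * ‖u - j‖^2 + ε * φ j ≤ (1/2) * ‖u - v‖^2 + ε * φ v) ∧
      (∀ j' : H,
        (∀ v : H, (1/2) * ‖u - j'‖^2 + ε * φ j' ≤ (1/2) * ‖u - v‖^2 + ε * φ v) → j' = j) ∧
      (∀ v : H, ⟪(1/ε) • (u - j), v - j⟫ + φ j ≤ φ v) :=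
  stmt_0_general φ hconv hlsc hφnn ε hε u
end

section
/- Let H be a real Hilbert space and K a real normed space. Let F : H × K → H, α ∈ ℝ and β ≥ 0 satisfy ⟨F(y,z) − F(y',z), y − y'⟩ ≤ α‖y − y'‖² for all y, y' ∈ H, z ∈ K, and ‖F(y,z) − F(y,z')‖ ≤ β‖z − z'‖ for all y ∈ H, z, z' ∈ K. Then for every r with 0 < r ≤ 1 and all y ∈ H, z ∈ K: 2⟨y, F(y,z)⟩ ≤ (2α + (1+r)β² + r)‖y‖² + (1/(1+r))‖z‖² + (1/r)‖F(0,0)‖². -/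
open RealInnerProductSpace

lemma stmt_11_aux (a b c : ℝ) (hc : 0 < c) : 2 * a * b ≤ c * a ^ 2 + b ^ 2 / c := by
  rw [← sub_nonneg]
  have : c * a ^ 2 + b ^ 2 / c - 2 * a * b = (c * a - b) ^ 2 / c := by
    field_simp; ring
  rw [this]
  positivity

/-- the basic estimate `2⟨y, F(y,z)⟩ ≤ (2α + (1+r)β² + r)‖y‖²
+ (1/(1+r))‖z‖² + (1/r)‖F(0,0)‖²` for a monotone, Lipschitz-in-`z` generator `F`. -/
theorem stmt_11 {H : Type*} [NormedAddCommGroup H] [InnerProductSpace ℝ H] [CompleteSpace H]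
    {K : Type*} [NormedAddCommGroup K] [NormedSpace ℝ K]
    (F : H × K → H) (α : ℝ) (β : ℝ) (hβ : 0 ≤ β)
    (hmono : ∀ (y y' : H) (z : K), ⟪F (y, z) - F (y', z), y - y'⟫ ≤ α * ‖y - y'‖^2)
    (hlip : ∀ (y : H) (z z' : K), ‖F (y, z) - F (y, z')‖ ≤ β * ‖z - z'‖)
    (r : ℝ) (hr0 : 0 < r) (hr1 : r ≤ 1) (y : H) (z : K) :
    2 * ⟪y, F (y, z)⟫ ≤ (2 * α + (1 + r) * β^2 + r) * ‖y‖^2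
      + (1 / (1 + r)) * ‖z‖^2 + (1 / r) * ‖F (0, 0)‖^2 := by
  have hr1' : (0:ℝ) < 1 + r := by linarith
  have h1 : ⟪y, F (y, z) - F (0, z)⟫ ≤ α * ‖y‖ ^ 2 := by
    have := hmono y 0 z
    simpa [sub_zero, real_inner_comm] using this
  have h2 : ⟪y, F (0, z) - F (0, 0)⟫ ≤ β * ‖y‖ * ‖z‖ := by
    calc ⟪y, F (0, z) - F (0, 0)⟫ ≤ ‖y‖ * ‖F (0, z) - F (0, 0)‖ := real_inner_le_norm _ _
      _ ≤ ‖y‖ * (β * ‖z‖) := by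
          have := hlip 0 z 0
          rw [sub_zero] at this
          exact mul_le_mul_of_nonneg_left this (norm_nonneg _)
      _ = β * ‖y‖ * ‖z‖ := by ring
  have h3 : ⟪y, F (0, 0)⟫ ≤ ‖y‖ * ‖F (0, 0)‖ := real_inner_le_norm _ _
  have hsplit : ⟪y, F (y, z)⟫ =
      ⟪y, F (y, z) - F (0, z)⟫ + ⟪y, F (0, z) - F (0, 0)⟫ + ⟪y, F (0, 0)⟫ := by
    rw [inner_sub_right, inner_sub_right]; ring
  have e2 : 2 * (β * ‖y‖) * ‖z‖ ≤ (1 + r) * (β * ‖y‖) ^ 2 + ‖z‖ ^ 2 / (1 + r) :=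
    stmt_11_aux _ _ _ hr1'
  have e3 : 2 * ‖y‖ * ‖F (0, 0)‖ ≤ r * ‖y‖ ^ 2 + ‖F (0, 0)‖ ^ 2 / r :=
    stmt_11_aux _ _ _ hr0
  rw [hsplit]
  have d2 : ‖z‖ ^ 2 / (1 + r) = 1 / (1 + r) * ‖z‖ ^ 2 := by ring
  have d3 : ‖F (0, 0)‖ ^ 2 / r = 1 / r * ‖F (0, 0)‖ ^ 2 := by ring
  have d1 : (1 + r) * (β * ‖y‖) ^ 2 = (1 + r) * β ^ 2 * ‖y‖ ^ 2 := by ring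
  rw [d2] at e2; rw [d3] at e3; rw [d1] at e2
  linarith
end
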